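/- arXiv:2205.09095 — 2 statements merged into one kernel-verified Lean document; each statement's English description precedes it below -/
import Mathlib

section
/- Let γ > 0, B > 0, m < M, and suppose (θ_t)_{t≥1} satisfies θ_{t+1} = θ_t + γ(l_t − r) with l_t, r ∈ [−B, B], θ_1 ∈ [m − 2γB, M + 2γB], and the property that θ_t > M implies l_t < r and θ_t < m implies l_t > r. Then for every T ≥ 1, |(1/T) Σ_{t=1}^T l_t − r| ≤ C/T where C = (M − m + 4γB)/γ. -/
/-!
The parameter `θ` can never escape `[m - 2γB, M + 2γB]`: a single step moves it by at most
`γ |l - r| ≤ 2γB`, and once it has left `[m, M]` the next step points back towards `[m, M]`.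
Telescoping the update rule gives `γ (∑ l t - T r) = θ T - θ 0`, and the right-hand side is at
most the width `M - m + 4γB` of that interval.
-/

open Finset Set

theorem add_mem_Icc_of_restoring_step {a b D x δ : ℝ} (hx : x ∈ Icc (a - D) (b + D))
    (hδ : |δ| ≤ D) (hhigh : b < x → δ ≤ 0) (hlow : x < a → 0 ≤ δ) :
    x + δ ∈ Icc (a - D) (b + D) := by
  obtain ⟨hδl, hδu⟩ := abs_le.mp hδ
  constructor
  · rcases lt_or_ge x a with hxa | hax
    · linarith [hx.1, hlow hxa]
    · linarith
  · rcases lt_or_ge b x with hbx | hxb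
    · linarith [hx.2, hhigh hbx]
    · linarith

theorem mem_Icc_of_restoring_steps {a b D : ℝ} {θ δ : ℕ → ℝ}
    (hupd : ∀ t, θ (t + 1) = θ t + δ t) (hδ : ∀ t, |δ t| ≤ D)
    (hhigh : ∀ t, b < θ t → δ t ≤ 0) (hlow : ∀ t, θ t < a → 0 ≤ δ t)
    (hinit : θ 0 ∈ Icc (a - D) (b + D)) (t : ℕ) :
    θ t ∈ Icc (a - D) (b + D) := by
  induction t with
  | zero => exact hinit
  | succ t ih =>
    rw [hupd t]
    exact add_mem_Icc_of_restoring_step ih (hδ t) (hhigh t) (hlow t)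

theorem sub_eq_mul_sum_of_update {γ : ℝ} {θ d : ℕ → ℝ}
    (hupd : ∀ t, θ (t + 1) = θ t + γ * d t) (T : ℕ) :
    θ T - θ 0 = γ * ∑ t ∈ range T, d t := by
  rw [← sum_range_sub, mul_sum]
  exact sum_congr rfl fun t _ => by rw [hupd t]; ring

theorem abs_mul_sub_le_of_mem_Icc {γ B l r : ℝ} (hγ : 0 < γ) (hl : l ∈ Icc (-B) B)
    (hr : r ∈ Icc (-B) B) : |γ * (l - r)| ≤ 2 * γ * B := by
  have hlr : |l - r| ≤ 2 * B := abs_le.mpr ⟨by linarith [hl.1, hr.2], by linarith [hl.2, hr.1]⟩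
  calc |γ * (l - r)| = γ * |l - r| := by rw [abs_mul, abs_of_pos hγ]
    _ ≤ γ * (2 * B) := by gcongr
    _ = 2 * γ * B := by ring

/-- Indices start at 0, with `θ 0` playing the role of `θ₁`. -/
theorem rolling_rc_finite_sample_bound_general
    (γ B m M r : ℝ) (θ l : ℕ → ℝ)
    (hγ : 0 < γ)
    (hupd : ∀ t, θ (t + 1) = θ t + γ * (l t - r))
    (hl : ∀ t, l t ∈ Set.Icc (-B) B)
    (hr : r ∈ Set.Icc (-B) B)
    (hinit : θ 0 ∈ Set.Icc (m - 2 * γ * B) (M + 2 * γ * B))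
    (hhigh : ∀ t, θ t > M → l t < r)
    (hlow : ∀ t, θ t < m → l t > r) :
    ∀ T : ℕ, 1 ≤ T →
      |(1 / (T : ℝ)) * ∑ t ∈ Finset.range T, l t - r| ≤
        ((M - m + 4 * γ * B) / γ) / (T : ℝ) := by
  intro T hT
  have hTpos : (0 : ℝ) < T := by exact_mod_cast hT
  have hθ : ∀ t, θ t ∈ Icc (m - 2 * γ * B) (M + 2 * γ * B) :=
    mem_Icc_of_restoring_steps hupd (fun t => abs_mul_sub_le_of_mem_Icc hγ (hl t) hr)
      (fun t ht => mul_nonpos_of_nonneg_of_nonpos hγ.le (sub_nonpos.mpr (hhigh t ht).le))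
      (fun t ht => mul_nonneg hγ.le (sub_nonneg.mpr (hlow t ht).le)) hinit
  have havg : (1 / (T : ℝ)) * ∑ t ∈ range T, l t - r = (θ T - θ 0) / γ / T := by
    rw [sub_eq_mul_sum_of_update hupd, sum_sub_distrib, sum_const, card_range, nsmul_eq_mul]
    field_simp
  have hwidth : |θ T - θ 0| ≤ M - m + 4 * γ * B := by
    have := Real.dist_le_of_mem_Icc (hθ T) (hθ 0)
    rw [Real.dist_eq] at this
    linarith
  rw [havg, abs_div, abs_div, abs_of_pos hγ, abs_of_pos hTpos]
  gcongr

/-- Combined finite-sample bound for Rolling RC: the empirical average loss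
is within `C/T` of the nominal risk level, where `C = (M - m + 4γB)/γ`.
Indices start at 0, with `θ 0` playing the role of `θ₁`. -/
theorem rolling_rc_finite_sample_bound
    (γ B m M r : ℝ) (θ l : ℕ → ℝ)
    (hγ : 0 < γ) (hB : 0 < B) (hmM : m < M)
    (hupd : ∀ t, θ (t + 1) = θ t + γ * (l t - r))
    (hl : ∀ t, l t ∈ Set.Icc (-B) B)
    (hr : r ∈ Set.Icc (-B) B)
    (hinit : θ 0 ∈ Set.Icc (m - 2 * γ * B) (M + 2 * γ * B))
    (hhigh : ∀ t, θ t > M → l t < r)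
    (hlow : ∀ t, θ t < m → l t > r) :
    ∀ T : ℕ, 1 ≤ T →
      |(1 / (T : ℝ)) * ∑ t ∈ Finset.range T, l t - r| ≤
        ((M - m + 4 * γ * B) / γ) / (T : ℝ) :=
  rolling_rc_finite_sample_bound_general γ B m M r θ l hγ hupd hl hr hinit hhigh hlow
end

section
/- Let k ≥ 1 and suppose for each i ∈ {1,…,k} the sequence θ^i_t satisfies the hypotheses of the exact multiple-risk-control theorem (update θ^i_{t+1} = θ^i_t + γ^i(l^i_t − r^i), losses bounded in [−B,B], θ^i_t ∈ [m − 2γ^i B, M + 2γ^i B] for all t). Then for every i and every T ≥ 1, |(1/T) Σ_{t=1}^T l^i_t − r^i| ≤ max{θ^i_1 − m + 2γ^i B, M + 2γ^i B − θ^i_1}/(T γ^i). -/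
/-!
Summing the update rule telescopes: `γ * ∑_{t<T} (l t - r) = θ T - θ 0`, so the empirical risk
minus its nominal level equals `(θ T - θ 0) / (T γ)`. Since `θ T` stays in the fixed interval
`[m - 2γB, M + 2γB]`, the numerator is bounded by the distance from `θ 0` to the farther endpoint.
-/

open Finset

section Telescoping

variable {R : Type*} [CommRing R] {θ l : ℕ → R} {γ r : R}

theorem mul_sum_range_sub_eq_of_update (hupd : ∀ t, θ (t + 1) = θ t + γ * (l t - r)) (n : ℕ) :
    γ * ∑ t ∈ range n, (l t - r) = θ n - θ 0 := by
  rw [mul_sum, ← sum_range_sub θ n]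
  exact sum_congr rfl fun t _ ↦ by rw [hupd t]; ring

end Telescoping

theorem average_sub_eq_div_of_update {K : Type*} [Field K] [CharZero K] {θ l : ℕ → K} {γ r : K}
    (hupd : ∀ t, θ (t + 1) = θ t + γ * (l t - r)) (hγ : γ ≠ 0) {T : ℕ} (hT : T ≠ 0) :
    (1 / (T : K)) * ∑ t ∈ range T, l t - r = (θ T - θ 0) / (T * γ) := by
  have hsum := mul_sum_range_sub_eq_of_update hupd T
  rw [sum_sub_distrib, sum_const, card_range, nsmul_eq_mul] at hsum
  have hT' : (T : K) ≠ 0 := Nat.cast_ne_zero.mpr hT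
  rw [← hsum]
  field_simp

theorem abs_sub_le_max_of_mem_Icc {α : Type*} [AddCommGroup α] [LinearOrder α]
    [IsOrderedAddMonoid α] {a b x y : α} (hy : y ∈ Set.Icc a b) :
    |y - x| ≤ max (x - a) (b - x) := by
  rw [abs_sub_le_iff]
  exact ⟨(sub_le_sub_right hy.2 x).trans (le_max_right _ _),
    (sub_le_sub_left hy.1 x).trans (le_max_left _ _)⟩

/-- Indices start at 0, with `θ i 0` playing the role of `θ^i₁`. -/
theorem rolling_rc_multi_finite_sample_general
    (k : ℕ)
    (γ r : Fin k → ℝ) (B m M : ℝ)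
    (θ l : Fin k → ℕ → ℝ)
    (hγ : ∀ i, 0 < γ i)
    (hupd : ∀ i t, θ i (t + 1) = θ i t + γ i * (l i t - r i))
    (hbdd : ∀ i t, θ i t ∈ Set.Icc (m - 2 * γ i * B) (M + 2 * γ i * B)) :
    ∀ i, ∀ T : ℕ, 1 ≤ T →
      |(1 / (T : ℝ)) * ∑ t ∈ Finset.range T, l i t - r i| ≤
        max (θ i 0 - m + 2 * γ i * B) (M + 2 * γ i * B - θ i 0) /
          ((T : ℝ) * γ i) := by
  intro i T hT
  have hTγ : 0 < (T : ℝ) * γ i := mul_pos (by exact_mod_cast hT) (hγ i)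
  rw [average_sub_eq_div_of_update (hupd i) (hγ i).ne' (by omega), abs_div, abs_of_pos hTγ]
  gcongr
  have hdrift := abs_sub_le_max_of_mem_Icc (x := θ i 0) (hbdd i T)
  rwa [sub_sub_eq_add_sub, add_sub_right_comm] at hdrift

/-- Finite-sample version of the exact multiple-risk-control theorem: each
of the `k` empirical risks deviates from its nominal level by `O(1/T)`.
Indices start at 0, with `θ i 0` playing the role of `θ^i₁`. -/
theorem rolling_rc_multi_finite_sample
    (k : ℕ) (hk : 1 ≤ k)
    (γ r : Fin k → ℝ) (B m M : ℝ)
    (θ l : Fin k → ℕ → ℝ)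
    (hγ : ∀ i, 0 < γ i) (hB : 0 < B)
    (hupd : ∀ i t, θ i (t + 1) = θ i t + γ i * (l i t - r i))
    (hl : ∀ i t, l i t ∈ Set.Icc (-B) B)
    (hbdd : ∀ i t, θ i t ∈ Set.Icc (m - 2 * γ i * B) (M + 2 * γ i * B)) :
    ∀ i, ∀ T : ℕ, 1 ≤ T →
      |(1 / (T : ℝ)) * ∑ t ∈ Finset.range T, l i t - r i| ≤
        max (θ i 0 - m + 2 * γ i * B) (M + 2 * γ i * B - θ i 0) /
          ((T : ℝ) * γ i) :=
  rolling_rc_multi_finite_sample_general k γ r B m M θ l hγ hupd hbdd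
end
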